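/- Atomic support coincides with atomic derivability: for any base B, atomic multisets L and K, and atom p, the support judgement L ⊩_B^K p holds if and only if L ⊎ K ⊢_B p. -/

import Mathlib

abbrev Atom := ℕ
abbrev ASeq := Multiset Atom × Atom
abbrev Box := Multiset ASeq
abbrev ARule := Multiset Box × Box × Atom
abbrev Base := Set ARule

/-- An atom `d` is persistent in `B` if there is a rule `⟨∅, S, d⟩ ∈ B` with `S` nonempty. -/
def Persistent (B : Base) (d : Atom) : Prop :=
  ∃ S : Box, S ≠ 0 ∧ ((0 : Multiset Box), S, d) ∈ B

/-- Atomic derivability in a base. -/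
inductive Deriv (B : Base) : Multiset Atom → Atom → Prop
  | ref (p : Atom) : Deriv B {p} p
  | app (S : Box) (p : Atom)
      (bc : List (Box × Multiset Atom))
      (dc : List (Atom × Multiset Atom))
      (hrule : ((↑(bc.map Prod.fst) : Multiset Box), S, p) ∈ B)
      (hpers : ∀ x ∈ dc, Persistent B x.1)
      (hbox : ∀ x ∈ bc, ∀ s ∈ x.1, Deriv B (x.2 + s.1) s.2)
      (hd : ∀ x ∈ dc, Deriv B x.2 x.1)
      (hS : ∀ s ∈ S, Deriv B ((↑(dc.map Prod.fst) : Multiset Atom) + s.1) s.2) :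
      Deriv B ((bc.map Prod.snd).sum + (dc.map Prod.snd).sum) p

/-- Formulas of intuitionistic linear logic. -/
inductive Fml : Type
  | atom : Atom → Fml
  | top : Fml
  | zero : Fml
  | one : Fml
  | limp : Fml → Fml → Fml
  | tens : Fml → Fml → Fml
  | wth : Fml → Fml → Fml
  | plus : Fml → Fml → Fml
  | bang : Fml → Fml
deriving DecidableEq

/-- The degree of a formula. -/
def deg : Fml → ℕ
  | .atom _ => 1
  | .top => 2
  | .zero => 2
  | .one => 2
  | .limp φ ψ => deg φ + deg ψ + 1
  | .tens φ ψ => deg φ + deg ψ + 1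
  | .wth φ ψ => deg φ + deg ψ + 1
  | .plus φ ψ => deg φ + deg ψ + 1
  | .bang φ => deg φ + 1

theorem one_le_deg (φ : Fml) : 1 ≤ deg φ := by
  cases φ <;> simp [deg] <;> omega

mutual
  /-- Support `⊩_B^L φ` (empty left-hand side). -/
  def Supp : Base → Multiset Atom → Fml → Prop
    | B, L, .atom p => Deriv B L p
    | _, _, .top => True
    | B, L, .zero => ∀ (K : Multiset Atom) (p : Atom), Supp B (L + K) (.atom p)
    | B, L, .one => ∀ C : Base, B ⊆ C → ∀ (K : Multiset Atom) (p : Atom),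
        Supp C K (.atom p) → Supp C (L + K) (.atom p)
    | B, L, .limp φ ψ => SuppInf1 B L φ ψ
    | B, L, .tens φ ψ => ∀ C : Base, B ⊆ C → ∀ (K : Multiset Atom) (p : Atom),
        SuppInf2 C K φ ψ (.atom p) → Supp C (L + K) (.atom p)
    | B, L, .wth φ ψ => Supp B L φ ∧ Supp B L ψ
    | B, L, .plus φ ψ => ∀ C : Base, B ⊆ C → ∀ (K : Multiset Atom) (p : Atom),
        SuppInf1 C K φ (.atom p) → SuppInf1 C K ψ (.atom p) → Supp C (L + K) (.atom p)
    | B, L, .bang φ => ∀ C : Base, B ⊆ C → ∀ (K : Multiset Atom) (p : Atom),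
        (∀ D : Base, C ⊆ D → Supp D 0 φ → Supp D K (.atom p)) → Supp C (L + K) (.atom p)
  termination_by B L φ => 2 * deg φ
  decreasing_by
    all_goals
      try simp only [deg]
      try have h1 := one_le_deg φ
      try have h2 := one_le_deg ψ
      try have h3 := one_le_deg χ
      try have h4 := one_le_deg α
      try have h5 := one_le_deg β
      omega

  /-- The (Inf) clause for a singleton context `{φ} ⊩_B^L χ`. -/
  def SuppInf1 : Base → Multiset Atom → Fml → Fml → Prop
    | B, L, .bang α, χ => ∀ C : Base, B ⊆ C → Supp C 0 α → Supp C L χ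
    | B, L, φ, χ => ∀ C : Base, B ⊆ C → ∀ K : Multiset Atom,
        Supp C K φ → Supp C (L + K) χ
  termination_by B L φ χ => 2 * (deg φ + deg χ) - 1
  decreasing_by
    all_goals
      try simp only [deg]
      try have h1 := one_le_deg φ
      try have h2 := one_le_deg ψ
      try have h3 := one_le_deg χ
      try have h4 := one_le_deg α
      try have h5 := one_le_deg β
      omega

  /-- The (Inf) clause for a two-element context `{φ, ψ} ⊩_B^L χ`. -/
  def SuppInf2 : Base → Multiset Atom → Fml → Fml → Fml → Prop
    | B, L, .bang α, .bang β, χ => ∀ C : Base, B ⊆ C →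
        Supp C 0 α → Supp C 0 β → Supp C L χ
    | B, L, .bang α, ψ, χ => ∀ C : Base, B ⊆ C → ∀ K : Multiset Atom,
        Supp C 0 α → Supp C K ψ → Supp C (L + K) χ
    | B, L, φ, .bang β, χ => ∀ C : Base, B ⊆ C → ∀ K : Multiset Atom,
        Supp C 0 β → Supp C K φ → Supp C (L + K) χ
    | B, L, φ, ψ, χ => ∀ C : Base, B ⊆ C → ∀ K₁ K₂ : Multiset Atom,
        Supp C K₁ φ → Supp C K₂ ψ → Supp C (L + K₁ + K₂) χ
  termination_by B L φ ψ χ => 2 * (deg φ + deg ψ + deg χ) - 1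
  decreasing_by
    all_goals
      try simp only [deg]
      try have h1 := one_le_deg φ
      try have h2 := one_le_deg ψ
      try have h3 := one_le_deg χ
      try have h4 := one_le_deg α
      try have h5 := one_le_deg β
      omega
end

/-- Is the formula a `!`-formula? -/
def isBang : Fml → Bool
  | .bang _ => true
  | _ => false

/-- Strip a top-level `!`. -/
def unbang : Fml → Fml
  | .bang φ => φ
  | φ => φ

/-- Support for a multiset of formulas: the `(⊎)` clause. -/
def SuppMS (B : Base) (L : Multiset Atom) (Γ : Multiset Fml) : Prop :=
  ∃ l : List (Fml × Multiset Atom), (↑(l.map Prod.fst) : Multiset Fml) = Γ ∧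
    (l.map Prod.snd).sum = L ∧ ∀ x ∈ l, Supp B x.2 x.1

/-- The official (Inf) clause: `Γ ⊩_B^L φ`, where `Γ = !Δ ⊎ Θ`. -/
def SuppSeq (B : Base) (L : Multiset Atom) (Γ : Multiset Fml) (φ : Fml) : Prop :=
  ∀ C : Base, B ⊆ C → ∀ K : Multiset Atom,
    SuppMS C 0 ((Γ.filter (fun ψ => isBang ψ = true)).map unbang) →
    SuppMS C K (Γ.filter (fun ψ => isBang ψ = false)) →
    Supp C (L + K) φ

/-- Validity of a sequent `(Γ : φ)`. -/
def Valid (Γ : Multiset Fml) (φ : Fml) : Prop :=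
  ∀ B : Base, SuppSeq B 0 Γ φ



theorem Deriv.mono {B C : Base} (hBC : B ⊆ C) {L : Multiset Atom} {p : Atom}
    (h : Deriv B L p) : Deriv C L p := by
  induction h with
  | ref q => exact Deriv.ref q
  | app S q bc dc hrule hpers hbox hd hS ihbox ihd ihS =>
      exact Deriv.app S q bc dc (hBC hrule)
        (fun x hx => (hpers x hx).imp (fun S hs => ⟨hs.1, hBC hs.2⟩)) ihbox ihd ihS

theorem mem_sum_split {α : Type} (a : Atom) :
    ∀ l : List (α × Multiset Atom), a ∈ (l.map Prod.snd).sum →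
    ∃ l₁ x l₂, l = l₁ ++ x :: l₂ ∧ a ∈ x.2 := by
  intro l
  induction l with
  | nil => simp
  | cons y t ih =>
      intro h
      simp only [List.map_cons, List.sum_cons, Multiset.mem_add] at h
      rcases h with h | h
      · exact ⟨[], y, t, rfl, h⟩
      · obtain ⟨l₁, x, l₂, rfl, hx⟩ := ih h
        exact ⟨y :: l₁, x, l₂, rfl, hx⟩

theorem Deriv.cut {B : Base} {Γ : Multiset Atom} {p : Atom} (h : Deriv B Γ p) :
    ∀ (a : Atom) (N M : Multiset Atom), Γ = M + {a} → Deriv B N a → Deriv B (M + N) p := by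
  induction h with
  | ref q =>
      intro a N M hM hN
      have hc : Multiset.card M = 0 := by
        have h := congrArg Multiset.card hM
        simp only [Multiset.card_add, Multiset.card_singleton] at h
        omega
      rw [Multiset.card_eq_zero] at hc
      subst hc
      simp only [zero_add] at hM ⊢
      obtain rfl : q = a := by simpa using hM
      exact hN
  | app S q bc dc hrule hpers hbox hd hS ihbox ihd ihS =>
      intro a N M hM hN
      have ha : a ∈ (bc.map Prod.snd).sum + (dc.map Prod.snd).sum := by
        rw [hM]; simp
      rw [Multiset.mem_add] at ha
      rcases ha with ha | ha
      · obtain ⟨l₁, x, l₂, hb, hx⟩ := mem_sum_split a bc ha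
        obtain ⟨e, hx2⟩ : ∃ e, x.2 = e + {a} :=
          ⟨x.2.erase a, by rw [add_comm, Multiset.singleton_add, Multiset.cons_erase hx]⟩
        set x' : Box × Multiset Atom := (x.1, e + N) with hx'
        have key : Deriv B (((l₁ ++ x' :: l₂).map Prod.snd).sum + (dc.map Prod.snd).sum) q := by
          refine Deriv.app S q (l₁ ++ x' :: l₂) dc ?_ hpers ?_ hd hS
          · have : (l₁ ++ x' :: l₂).map Prod.fst = bc.map Prod.fst := by
              rw [hb]; simp [hx']
            rw [this]; exact hrule
          · intro y hy s hs
            rcases (by simpa using hy : y ∈ l₁ ∨ y = x' ∨ y ∈ l₂) with h1 | h1 | h1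
            · exact hbox y (by rw [hb]; simp [h1]) s hs
            · subst h1
              have h := ihbox x (by rw [hb]; simp) s hs a N (e + s.1)
                (by rw [hx2]; abel) hN
              have h2 : x'.2 + s.1 = e + s.1 + N := by rw [hx']; exact add_right_comm _ _ _
              rw [h2]; exact h
            · exact hbox y (by rw [hb]; simp [h1]) s hs
        have heq : ((l₁ ++ x' :: l₂).map Prod.snd).sum + (dc.map Prod.snd).sum = M + N := by
          have h2 : M + {a} =
              ((l₁.map Prod.snd).sum + e + (l₂.map Prod.snd).sum
                + (dc.map Prod.snd).sum) + {a} := by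
            rw [← hM, hb]; simp [hx2]; abel
          have h3 := add_right_cancel h2
          rw [h3]; simp [hx']; abel
        rwa [heq] at key
      · obtain ⟨l₁, x, l₂, hb, hx⟩ := mem_sum_split a dc ha
        obtain ⟨e, hx2⟩ : ∃ e, x.2 = e + {a} :=
          ⟨x.2.erase a, by rw [add_comm, Multiset.singleton_add, Multiset.cons_erase hx]⟩
        set x' : Atom × Multiset Atom := (x.1, e + N) with hx'
        have hfst : (l₁ ++ x' :: l₂).map Prod.fst = dc.map Prod.fst := by
          rw [hb]; simp [hx']
        have key : Deriv B ((bc.map Prod.snd).sum + ((l₁ ++ x' :: l₂).map Prod.snd).sum) q := by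
          refine Deriv.app S q bc (l₁ ++ x' :: l₂) hrule ?_ hbox ?_ ?_
          · intro y hy
            rcases (by simpa using hy : y ∈ l₁ ∨ y = x' ∨ y ∈ l₂) with h1 | h1 | h1
            · exact hpers y (by rw [hb]; simp [h1])
            · subst h1; exact hpers x (by rw [hb]; simp)
            · exact hpers y (by rw [hb]; simp [h1])
          · intro y hy
            rcases (by simpa using hy : y ∈ l₁ ∨ y = x' ∨ y ∈ l₂) with h1 | h1 | h1
            · exact hd y (by rw [hb]; simp [h1])
            · subst h1
              exact ihd x (by rw [hb]; simp) a N e hx2 hN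
            · exact hd y (by rw [hb]; simp [h1])
          · intro s hs
            rw [hfst]; exact hS s hs
        have heq : (bc.map Prod.snd).sum + ((l₁ ++ x' :: l₂).map Prod.snd).sum = M + N := by
          have h2 : M + {a} =
              ((bc.map Prod.snd).sum + (l₁.map Prod.snd).sum + e
                + (l₂.map Prod.snd).sum) + {a} := by
            rw [← hM, hb]; simp [hx2]; abel
          have h3 := add_right_cancel h2
          rw [h3]; simp [hx']; abel
        rwa [heq] at key

theorem Deriv.multicut {B : Base} {p : Atom} :
    ∀ (l : List (Atom × Multiset Atom)) (M : Multiset Atom),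
      Deriv B ((↑(l.map Prod.fst) : Multiset Atom) + M) p →
      (∀ x ∈ l, Deriv B x.2 x.1) →
      Deriv B ((l.map Prod.snd).sum + M) p := by
  intro l
  induction l with
  | nil => intro M h _; simpa using h
  | cons y t ih =>
      intro M h hall
      have h1 : (↑((y :: t).map Prod.fst) : Multiset Atom) + M
          = ((↑(t.map Prod.fst) : Multiset Atom) + M) + {y.1} := by
        simp only [List.map_cons]
        rw [← Multiset.cons_coe, ← Multiset.singleton_add]
        abel
      rw [h1] at h
      have h2 := h.cut y.1 y.2 _ rfl (hall y (by simp))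
      have h3 : (↑(t.map Prod.fst) : Multiset Atom) + M + y.2
          = ↑(t.map Prod.fst) + (M + y.2) := by abel
      rw [h3] at h2
      have h4 := ih (M + y.2) h2 (fun x hx => hall x (by simp [hx]))
      have h5 : (t.map Prod.snd).sum + (M + y.2) = ((y :: t).map Prod.snd).sum + M := by
        simp; abel
      rwa [h5] at h4

theorem singleton_sum : ∀ l : List Atom,
    (l.map (fun a => ({a} : Multiset Atom))).sum = ↑l := by
  intro l
  induction l with
  | nil => simp
  | cons a t ih => simp [ih, ← Multiset.cons_coe, ← Multiset.singleton_add]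

def unatom : Fml → Atom
  | .atom a => a
  | _ => 0

theorem atomic_support_iff_atomic_derivability (B : Base) (L K : Multiset Atom) (p : Atom) :
    SuppSeq B K (L.map Fml.atom) (.atom p) ↔ Deriv B (L + K) p := by
  have hfilT : (L.map Fml.atom).filter (fun ψ => isBang ψ = true) = 0 := by
    rw [Multiset.filter_eq_nil]
    intro x hx
    obtain ⟨a, _, rfl⟩ := Multiset.mem_map.mp hx
    simp [isBang]
  have hfilF : (L.map Fml.atom).filter (fun ψ => isBang ψ = false) = L.map Fml.atom := by
    rw [Multiset.filter_eq_self]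
    intro x hx
    obtain ⟨a, _, rfl⟩ := Multiset.mem_map.mp hx
    simp [isBang]
  constructor
  · intro h
    have h1 : SuppMS B 0 (((L.map Fml.atom).filter (fun ψ => isBang ψ = true)).map unbang) := by
      rw [hfilT]
      exact ⟨[], by simp, by simp, by simp⟩
    have h2 : SuppMS B L ((L.map Fml.atom).filter (fun ψ => isBang ψ = false)) := by
      rw [hfilF]
      refine ⟨L.toList.map (fun a => (Fml.atom a, ({a} : Multiset Atom))), ?_, ?_, ?_⟩
      · simp only [List.map_map]
        show (↑(L.toList.map Fml.atom) : Multiset Fml) = L.map Fml.atom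
        rw [← Multiset.map_coe, Multiset.coe_toList]
      · simp only [List.map_map]
        show (L.toList.map (fun a => ({a} : Multiset Atom))).sum = L
        rw [singleton_sum, Multiset.coe_toList]
      · intro x hx
        simp only [List.mem_map] at hx
        obtain ⟨a, _, rfl⟩ := hx
        rw [Supp]
        exact Deriv.ref a
    have := h B (Set.Subset.refl B) L h1 h2
    rw [Supp] at this
    rwa [add_comm] at this
  · intro h C hBC K' _ h2
    rw [hfilF] at h2
    obtain ⟨l, hfst, hsnd, hall⟩ := h2
    set l' : List (Atom × Multiset Atom) := l.map (fun x => (unatom x.1, x.2)) with hl'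
    have hfst' : (↑(l'.map Prod.fst) : Multiset Atom) = L := by
      have : l'.map Prod.fst = (l.map Prod.fst).map unatom := by
        simp [hl', List.map_map, Function.comp]
      rw [this, ← Multiset.map_coe, hfst, Multiset.map_map]
      refine (Multiset.map_congr rfl (fun a _ => ?_)).trans (Multiset.map_id L)
      rfl
    have hall' : ∀ x ∈ l', Deriv C x.2 x.1 := by
      intro x hx
      simp only [hl', List.mem_map] at hx
      obtain ⟨y, hy, rfl⟩ := hx
      have hy1 : y.1 ∈ (↑(l.map Prod.fst) : Multiset Fml) := by
        exact_mod_cast List.mem_map_of_mem (f := Prod.fst) hy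
      rw [hfst] at hy1
      obtain ⟨a, _, ha⟩ := Multiset.mem_map.mp hy1
      have := hall y hy
      rw [← ha, Supp] at this
      simpa [← ha, unatom] using this
    have hD : Deriv C ((↑(l'.map Prod.fst) : Multiset Atom) + K) p := by
      rw [hfst']; exact h.mono hBC
    have := Deriv.multicut l' K hD hall'
    have hsnd' : (l'.map Prod.snd).sum = K' := by
      rw [hl', List.map_map]; exact hsnd
    rw [Supp, add_comm]
    rwa [hsnd'] at this
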